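/- arXiv:2207.11371 — 2 statements merged into one kernel-verified Lean document; each statement's English description precedes it below -/
import Mathlib

section
/- Let G = (ℝ^d, ·) be a group with polynomial multiplication and inversion and identity 0, whose left translations preserve Lebesgue measure, and let (δ_t)_{t>0} be straight dilations with exponents a₁,…,a_d > 0 forming an approximate group dilation structure for G. Let Γ be a subgroup of G admitting a bounded measurable set U ⊆ ℝ^d of positive Lebesgue measure such that the translates γ·U, γ ∈ Γ, pairwise intersect in Lebesgue-null sets. Then for every compact set K ⊆ ℝ^d there is a constant C(K) such that for every t ≥ 1 the set Γ ∩ δ_t(K) is finite and #(Γ ∩ δ_t(K)) ≤ C(K)·t^{a₁+⋯+a_d}. -/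
open Filter Topology MeasureTheory

noncomputable section

/-- Straight dilation with exponents `a`: `(dil a t u) i = t ^ (a i) * u i`. -/
def dil {d : ℕ} (a : Fin d → ℝ) (t : ℝ) (u : Fin d → ℝ) : Fin d → ℝ :=
  fun i => t ^ a i * u i

/-- A group structure on `ℝ^d` with identity `0` whose multiplication and inversion are
given coordinatewise by real polynomial functions of the coordinates. -/
structure PolyGroup (d : ℕ) where
  mul : (Fin d → ℝ) → (Fin d → ℝ) → (Fin d → ℝ)
  inv : (Fin d → ℝ) → (Fin d → ℝ)
  mul_assoc' : ∀ x y z, mul (mul x y) z = mul x (mul y z)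
  mul_zero' : ∀ x, mul x 0 = x
  zero_mul' : ∀ x, mul 0 x = x
  mul_inv' : ∀ x, mul x (inv x) = 0
  inv_mul' : ∀ x, mul (inv x) x = 0
  poly_mul : ∀ i, ∃ p : MvPolynomial (Fin d ⊕ Fin d) ℝ,
    ∀ x y, mul x y i = MvPolynomial.eval (Sum.elim x y) p
  poly_inv : ∀ i, ∃ p : MvPolynomial (Fin d) ℝ,
    ∀ x, inv x i = MvPolynomial.eval x p

/-- Euclidean norm on `ℝ^d`. -/
def eucNorm {d : ℕ} (x : Fin d → ℝ) : ℝ := Real.sqrt (∑ i, x i ^ 2)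

/-- A straight approximate group dilation structure for `G`, with the limit law `bullet`
and limit inverse `bulletInv`. -/
structure ApproxDil (d : ℕ) (G : PolyGroup d) where
  a : Fin d → ℝ
  a_pos : ∀ i, 0 < a i
  bulletInv : (Fin d → ℝ) → (Fin d → ℝ)
  bullet : (Fin d → ℝ) → (Fin d → ℝ) → (Fin d → ℝ)
  tendsto_inv : ∀ x,
    Tendsto (fun t : ℝ => dil a t⁻¹ (G.inv (dil a t x))) atTop (𝓝 (bulletInv x))
  tendsto_mul : ∀ x y,
    Tendsto (fun t : ℝ => dil a t⁻¹ (G.mul (dil a t x) (dil a t y))) atTop (𝓝 (bullet x y))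

/-!
The translates `γ · U` with `γ ∈ Γ ∩ δ_t(K)` are almost disjoint and all have the volume of `U`,
by invariance of Lebesgue measure. Writing `u = δ_t(δ_{1/t} u)`, where `δ_{1/t} u` stays bounded
for `t ≥ 1`, such a translate consists of products `δ_t(x) · δ_t(y)` with `x, y` in a fixed
bounded set. Each coordinate of such a product is a polynomial in `x, y` and, after the
substitution, a finite sum `∑ c_e t^e` whose coefficients depend polynomially on `x, y`. Since
`t^{-a_i}` times this sum converges as `t → ∞`, every exponent above `a_i` has a vanishing
coefficient, so the `i`-th coordinate is `O(t^{a_i})` uniformly. Hence all these translates lie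
in a box of volume `O(t^{a₁+⋯+a_d})`, and packing gives the count.
-/

open scoped ENNReal Function

theorem tendsto_sum_mul_rpow_sub_of_le {s : Finset ℝ} {c : ℝ → ℝ} {M : ℝ} (hM : M ∈ s)
    (hle : ∀ e ∈ s, c e ≠ 0 → e ≤ M) :
    Tendsto (fun t : ℝ => ∑ e ∈ s, c e * t ^ (e - M)) atTop (𝓝 (c M)) := by
  have hterm : ∀ e ∈ s,
      Tendsto (fun t : ℝ => c e * t ^ (e - M)) atTop (𝓝 (if e = M then c M else 0)) := by
    intro e he
    by_cases heM : e = M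
    · subst heM
      simp
    by_cases hce : c e = 0
    · simp [hce, heM]
    have hlt : 0 < M - e := sub_pos.2 ((hle e he hce).lt_of_ne heM)
    simpa [heM, neg_sub] using (tendsto_rpow_neg_atTop hlt).const_mul (c e)
  simpa [Finset.sum_ite_eq', hM] using tendsto_finsetSum s hterm

theorem coeff_eq_zero_of_tendsto_sum_mul_rpow {s : Finset ℝ} {c : ℝ → ℝ} {L : ℝ}
    (h : Tendsto (fun t : ℝ => ∑ e ∈ s, c e * t ^ e) atTop (𝓝 L)) {e : ℝ} (he : e ∈ s)
    (he_pos : 0 < e) : c e = 0 := by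
  by_contra hce
  classical
  set P := s.filter fun e => 0 < e ∧ c e ≠ 0
  have hP : P.Nonempty := ⟨e, Finset.mem_filter.2 ⟨he, he_pos, hce⟩⟩
  obtain ⟨hMs, hM_pos, hcM⟩ := Finset.mem_filter.1 (P.max'_mem hP)
  set M := P.max' hP
  have hle : ∀ e ∈ s, c e ≠ 0 → e ≤ M := fun e he hce =>
    (le_or_gt e 0).elim (fun h => h.trans hM_pos.le)
      fun h => P.le_max' e (Finset.mem_filter.2 ⟨he, h, hce⟩)
  -- `t ^ (-M)` times the sum tends both to `c M` and to `L * 0`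
  have hrescale : (fun t : ℝ => ∑ e ∈ s, c e * t ^ (e - M)) =ᶠ[atTop]
      fun t => (∑ e ∈ s, c e * t ^ e) * t ^ (-M) := by
    filter_upwards [eventually_gt_atTop 0] with t ht
    simp only [Finset.sum_mul, mul_assoc, ← Real.rpow_add ht, sub_eq_add_neg]
  have h₁ := (tendsto_sum_mul_rpow_sub_of_le hMs hle).congr' hrescale
  have h₂ := h.mul (tendsto_rpow_neg_atTop hM_pos)
  exact hcM (by simpa using tendsto_nhds_unique h₁ h₂)

theorem abs_sum_mul_rpow_le_of_tendsto {ι : Type*} {S : Finset ι} {c e : ι → ℝ} {L : ℝ}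
    (h : Tendsto (fun t : ℝ => ∑ m ∈ S, c m * t ^ e m) atTop (𝓝 L)) {t : ℝ} (ht : 1 ≤ t) :
    |∑ m ∈ S, c m * t ^ e m| ≤ ∑ m ∈ S, |c m| := by
  classical
  set c' : ℝ → ℝ := fun ε => ∑ m ∈ S with e m = ε, c m
  have hmaps : ∀ m ∈ S, e m ∈ S.image e := fun m hm => Finset.mem_image_of_mem e hm
  -- after grouping equal exponents, the coefficients of positive exponents vanish
  have hgroup : ∀ t : ℝ, ∑ m ∈ S, c m * t ^ e m = ∑ ε ∈ S.image e, c' ε * t ^ ε := by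
    intro t
    rw [← Finset.sum_fiberwise_of_maps_to hmaps]
    refine Finset.sum_congr rfl fun ε _ => ?_
    rw [Finset.sum_mul]
    exact Finset.sum_congr rfl fun m hm => by rw [(Finset.mem_filter.1 hm).2]
  simp only [hgroup] at h ⊢
  have hterm : ∀ ε ∈ S.image e, |c' ε * t ^ ε| ≤ |c' ε| := by
    intro ε hε
    rcases le_or_gt ε 0 with hε0 | hε0
    · rw [abs_mul, abs_of_nonneg (Real.rpow_nonneg (zero_le_one.trans ht) ε)]
      exact mul_le_of_le_one_right (abs_nonneg _) (Real.rpow_le_one_of_one_le_of_nonpos ht hε0)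
    · simp [coeff_eq_zero_of_tendsto_sum_mul_rpow h hε hε0]
  calc |∑ ε ∈ S.image e, c' ε * t ^ ε|
      ≤ ∑ ε ∈ S.image e, |c' ε| :=
        (Finset.abs_sum_le_sum_abs _ _).trans (Finset.sum_le_sum hterm)
    _ ≤ ∑ ε ∈ S.image e, ∑ m ∈ S with e m = ε, |c m| :=
        Finset.sum_le_sum fun ε _ => Finset.abs_sum_le_sum_abs _ _
    _ = ∑ m ∈ S, |c m| := Finset.sum_fiberwise_of_maps_to hmaps _

namespace MvPolynomial

variable {σ : Type*}

theorem eval_rpow_mul (p : MvPolynomial σ ℝ) (w z : σ → ℝ) {t : ℝ} (ht : 0 < t) :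
    eval (fun v => t ^ w v * z v) p = ∑ m ∈ p.support,
      (coeff m p * ∏ v ∈ m.support, z v ^ m v) * t ^ (∑ v ∈ m.support, (m v : ℝ) * w v) := by
  rw [eval_eq]
  refine Finset.sum_congr rfl fun m _ => ?_
  rw [Real.rpow_sum_of_pos ht, mul_assoc, ← Finset.prod_mul_distrib]
  congr 1
  refine Finset.prod_congr rfl fun v _ => ?_
  rw [mul_pow, mul_comm (z v ^ m v), ← Real.rpow_natCast, ← Real.rpow_mul ht.le, mul_comm (w v)]

theorem exists_abs_eval_rpow_mul_le (p : MvPolynomial σ ℝ) (w : σ → ℝ) (b : ℝ) {R : ℝ}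
    (hR : 0 ≤ R) :
    ∃ C, 0 ≤ C ∧ ∀ z : σ → ℝ, (∀ v, |z v| ≤ R) → ∀ L : ℝ,
      Tendsto (fun t : ℝ => t⁻¹ ^ b * eval (fun v => t ^ w v * z v) p) atTop (𝓝 L) →
      ∀ t : ℝ, 1 ≤ t → |eval (fun v => t ^ w v * z v) p| ≤ C * t ^ b := by
  refine ⟨∑ m ∈ p.support, |coeff m p| * R ^ (∑ v ∈ m.support, m v),
    Finset.sum_nonneg fun m _ => by positivity, fun z hz L hL t ht => ?_⟩
  have hexpand : ∀ t : ℝ, 0 < t → t⁻¹ ^ b * eval (fun v => t ^ w v * z v) p =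
      ∑ m ∈ p.support, (coeff m p * ∏ v ∈ m.support, z v ^ m v) *
        t ^ ((∑ v ∈ m.support, (m v : ℝ) * w v) - b) := by
    intro t ht
    simp only [eval_rpow_mul p w z ht, Finset.mul_sum, Real.rpow_sub ht, Real.inv_rpow ht.le]
    exact Finset.sum_congr rfl fun m _ => by ring
  have hbound := abs_sum_mul_rpow_le_of_tendsto
    (hL.congr' <| (eventually_gt_atTop 0).mono hexpand) ht
  have ht₀ : 0 < t := zero_lt_one.trans_le ht
  rw [← hexpand t ht₀, abs_mul, abs_of_pos (by positivity), Real.inv_rpow ht₀.le,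
    inv_mul_le_iff₀ (by positivity)] at hbound
  refine hbound.trans ?_
  rw [mul_comm]
  gcongr with m
  rw [abs_mul, Finset.abs_prod, ← Finset.prod_pow_eq_pow_sum]
  gcongr with v
  rw [abs_pow]
  exact pow_le_pow_left₀ (abs_nonneg _) (hz v) _

end MvPolynomial

section Dilation

variable {d : ℕ} {a : Fin d → ℝ} {t : ℝ}

theorem dil_dil_inv (ht : 0 < t) (u : Fin d → ℝ) : dil a t (dil a t⁻¹ u) = u := by
  funext i
  simp only [dil, Real.inv_rpow ht.le, ← mul_assoc,
    mul_inv_cancel₀ (Real.rpow_pos_of_pos ht _).ne', one_mul]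

theorem abs_dil_inv_le (ha : ∀ i, 0 ≤ a i) (ht : 1 ≤ t) (u : Fin d → ℝ) (i : Fin d) :
    |dil a t⁻¹ u i| ≤ |u i| := by
  have ht' : 0 ≤ t⁻¹ := inv_nonneg.2 (zero_le_one.trans ht)
  rw [dil, abs_mul, abs_of_nonneg (Real.rpow_nonneg ht' _)]
  exact mul_le_of_le_one_left (abs_nonneg _)
    (Real.rpow_le_one ht' (inv_le_one_of_one_le₀ ht) (ha i))

theorem toReal_volume_Icc_neg_mul_rpow (a : Fin d → ℝ) {C : ℝ} (hC : 0 ≤ C) (ht : 0 < t) :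
    (volume (Set.Icc (fun i => -(C * t ^ a i)) (fun i => C * t ^ a i))).toReal =
      (2 * C) ^ d * t ^ ∑ i, a i := by
  rw [Real.volume_Icc_pi_toReal fun i => neg_le_self (by positivity), Real.rpow_sum_of_pos ht,
    ← Fin.prod_const, ← Finset.prod_mul_distrib]
  exact Finset.prod_congr rfl fun i _ => by ring

end Dilation

namespace PolyGroup

variable {d : ℕ} (G : PolyGroup d)

theorem image_mul_left_eq_preimage (γ : Fin d → ℝ) (U : Set (Fin d → ℝ)) :
    G.mul γ '' U = G.mul (G.inv γ) ⁻¹' U := by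
  ext w
  constructor
  · rintro ⟨u, hu, rfl⟩
    rwa [Set.mem_preimage, ← G.mul_assoc', G.inv_mul', G.zero_mul']
  · exact fun hw => ⟨_, hw, by rw [← G.mul_assoc', G.mul_inv', G.zero_mul']⟩

theorem nullMeasurableSet_image_mul_left {μ : Measure (Fin d → ℝ)}
    (hμ : ∀ x, MeasurePreserving (G.mul x) μ μ) (γ : Fin d → ℝ) {U : Set (Fin d → ℝ)}
    (hU : MeasurableSet U) : NullMeasurableSet (G.mul γ '' U) μ := by
  rw [G.image_mul_left_eq_preimage]
  exact ((hμ _).measurable hU).nullMeasurableSet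

theorem measure_image_mul_left {μ : Measure (Fin d → ℝ)}
    (hμ : ∀ x, MeasurePreserving (G.mul x) μ μ) (γ : Fin d → ℝ) {U : Set (Fin d → ℝ)}
    (hU : MeasurableSet U) : μ (G.mul γ '' U) = μ U := by
  rw [G.image_mul_left_eq_preimage]
  exact (hμ _).measure_preimage hU.nullMeasurableSet

theorem exists_abs_mul_dil_le (D : ApproxDil d G) {R : ℝ} (hR : 0 ≤ R) :
    ∃ C, 0 ≤ C ∧ ∀ t : ℝ, 1 ≤ t → ∀ x y : Fin d → ℝ, (∀ j, |x j| ≤ R) → (∀ j, |y j| ≤ R) →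
      ∀ i, |G.mul (dil D.a t x) (dil D.a t y) i| ≤ C * t ^ D.a i := by
  choose p hp using G.poly_mul
  choose C hC₀ hC using fun i =>
    (p i).exists_abs_eval_rpow_mul_le (Sum.elim D.a D.a) (D.a i) hR
  have hmul : ∀ t x y i, G.mul (dil D.a t x) (dil D.a t y) i =
      MvPolynomial.eval (fun v => t ^ Sum.elim D.a D.a v * Sum.elim x y v) (p i) := by
    intro t x y i
    have helim : Sum.elim (dil D.a t x) (dil D.a t y) =
        fun v => t ^ Sum.elim D.a D.a v * Sum.elim x y v := by
      funext v
      cases v <;> rfl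
    rw [hp, helim]
  refine ⟨∑ i, C i, Finset.sum_nonneg fun i _ => hC₀ i, fun t ht x y hx hy i => ?_⟩
  have hxy : ∀ v, |Sum.elim x y v| ≤ R := by
    rintro (v | v)
    exacts [hx v, hy v]
  have hlim := tendsto_pi_nhds.1 (D.tendsto_mul x y) i
  simp only [dil, hmul] at hlim
  rw [hmul]
  refine (hC i _ hxy _ hlim t ht).trans ?_
  gcongr
  exact Finset.single_le_sum (fun j _ => hC₀ j) (Finset.mem_univ i)

theorem exists_image_mul_dil_subset_Icc (D : ApproxDil d G) {R : ℝ} (hR : 0 ≤ R) :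
    ∃ C, 0 ≤ C ∧ ∀ t : ℝ, 1 ≤ t → ∀ x : Fin d → ℝ, (∀ j, |x j| ≤ R) →
      ∀ U : Set (Fin d → ℝ), (∀ u ∈ U, ∀ j, |u j| ≤ R) →
        G.mul (dil D.a t x) '' U ⊆
          Set.Icc (fun i => -(C * t ^ D.a i)) (fun i => C * t ^ D.a i) := by
  obtain ⟨C, hC₀, hC⟩ := G.exists_abs_mul_dil_le D hR
  refine ⟨C, hC₀, fun t ht x hx U hU => ?_⟩
  rintro _ ⟨u, hu, rfl⟩
  have hbound := hC t ht x (dil D.a t⁻¹ u) hx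
    fun j => (abs_dil_inv_le (fun i => (D.a_pos i).le) ht u j).trans (hU u hu j)
  rw [dil_dil_inv (zero_lt_one.trans_le ht)] at hbound
  exact ⟨fun i => neg_le_of_abs_le (hbound i), fun i => le_of_abs_le (hbound i)⟩

end PolyGroup

theorem Set.finite_of_aedisjoint_of_measure_eq {α ι : Type*} [MeasurableSpace α]
    {μ : Measure α} {S : Set ι} {A : ι → Set α} {B : Set α} {v : ℝ≥0∞}
    (hA : ∀ i ∈ S, NullMeasurableSet (A i) μ) (hdisj : S.Pairwise (AEDisjoint μ on A))
    (hv : 0 < v) (hAv : ∀ i ∈ S, μ (A i) = v) (hAB : ∀ i ∈ S, A i ⊆ B) (hB : μ B ≠ ∞) :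
    S.Finite := by
  have hfin := Measure.finite_const_le_meas_of_disjoint_iUnion₀ μ hv
    (As := fun i : S => A i) (fun i => hA i i.2)
    (fun i j hij => hdisj i.2 j.2 (by simpa [Subtype.ext_iff] using hij))
    (ne_top_of_le_ne_top hB (measure_mono (Set.iUnion_subset fun i => hAB i i.2)))
  simp only [hAv _ (Subtype.prop _), le_refl, Set.ofPred_true, Set.finite_univ_iff] at hfin
  exact Set.toFinite S

theorem Set.Finite.ncard_mul_le_measure_of_aedisjoint {α ι : Type*} [MeasurableSpace α]
    {μ : Measure α} {S : Set ι} (hS : S.Finite) {A : ι → Set α} {B : Set α} {v : ℝ≥0∞}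
    (hA : ∀ i ∈ S, NullMeasurableSet (A i) μ) (hdisj : S.Pairwise (AEDisjoint μ on A))
    (hAv : ∀ i ∈ S, μ (A i) = v) (hAB : ∀ i ∈ S, A i ⊆ B) : S.ncard * v ≤ μ B := by
  calc S.ncard * v = ∑ i ∈ hS.toFinset, μ (A i) := by
        rw [Set.ncard_eq_toFinset_card S hS, ← nsmul_eq_mul, ← Finset.sum_const]
        exact Finset.sum_congr rfl fun i hi => (hAv i (hS.mem_toFinset.1 hi)).symm
    _ = μ (⋃ i ∈ hS.toFinset, A i) :=
        (measure_biUnion_finset₀ (by simpa using hdisj) fun i hi => hA i (by simpa using hi)).symm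
    _ ≤ μ B := measure_mono (Set.iUnion₂_subset fun i hi => hAB i (by simpa using hi))

theorem stmt_14_general (d : ℕ) (G : PolyGroup d)
    (hHaar : ∀ x, MeasurePreserving (fun y => G.mul x y) volume volume)
    (D : ApproxDil d G)
    (Γ : Set (Fin d → ℝ))
    (U : Set (Fin d → ℝ)) (hUmeas : MeasurableSet U) (hUbdd : Bornology.IsBounded U)
    (hUpos : 0 < volume U)
    (hUdisj : ∀ γ ∈ Γ, ∀ γ' ∈ Γ, γ ≠ γ' →
      volume (((fun y => G.mul γ y) '' U) ∩ ((fun y => G.mul γ' y) '' U)) = 0)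
    (K : Set (Fin d → ℝ)) (hK : IsCompact K) :
    ∃ C : ℝ, ∀ t : ℝ, 1 ≤ t →
      (Γ ∩ dil D.a t '' K).Finite ∧
      ((Γ ∩ dil D.a t '' K).ncard : ℝ) ≤ C * t ^ (∑ i, D.a i) := by
  obtain ⟨R, hR, hKU⟩ := (hK.isBounded.union hUbdd).exists_pos_norm_le
  have hcoord : ∀ x ∈ K ∪ U, ∀ j, |x j| ≤ R := fun x hx j =>
    (norm_le_pi_norm x j).trans (hKU x hx)
  obtain ⟨C, hC₀, hbox⟩ := G.exists_image_mul_dil_subset_Icc D hR.le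
  have hmeas := fun γ => G.nullMeasurableSet_image_mul_left hHaar γ hUmeas
  have hvol := fun γ => G.measure_image_mul_left hHaar γ hUmeas
  have hdisj : Γ.Pairwise (AEDisjoint volume on fun γ => G.mul γ '' U) := hUdisj
  refine ⟨(2 * C) ^ d / (volume U).toReal, fun t ht => ?_⟩
  have hsub : ∀ γ ∈ Γ ∩ dil D.a t '' K, G.mul γ '' U ⊆
      Set.Icc (fun i => -(C * t ^ D.a i)) (fun i => C * t ^ D.a i) := by
    rintro _ ⟨-, x, hx, rfl⟩
    exact hbox t ht x (hcoord x (.inl hx)) U fun u hu => hcoord u (.inr hu)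
  have hfin := Set.finite_of_aedisjoint_of_measure_eq (fun γ _ => hmeas γ)
    (hdisj.mono Set.inter_subset_left) hUpos (fun γ _ => hvol γ) hsub measure_Icc_lt_top.ne
  refine ⟨hfin, ?_⟩
  have hpack := ENNReal.toReal_mono measure_Icc_lt_top.ne <|
    hfin.ncard_mul_le_measure_of_aedisjoint (fun γ _ => hmeas γ)
      (hdisj.mono Set.inter_subset_left) (fun γ _ => hvol γ) hsub
  rw [ENNReal.toReal_mul, ENNReal.toReal_natCast,
    toReal_volume_Icc_neg_mul_rpow D.a hC₀ (zero_lt_one.trans_le ht)] at hpack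
  rwa [div_mul_eq_mul_div, le_div_iff₀ (ENNReal.toReal_pos hUpos.ne' hUbdd.measure_lt_top.ne)]

theorem stmt_14 (d : ℕ) (G : PolyGroup d)
    (hHaar : ∀ x, MeasurePreserving (fun y => G.mul x y) volume volume)
    (D : ApproxDil d G)
    (Γ : Set (Fin d → ℝ)) (hΓ0 : (0 : Fin d → ℝ) ∈ Γ)
    (hΓmul : ∀ x ∈ Γ, ∀ y ∈ Γ, G.mul x y ∈ Γ) (hΓinv : ∀ x ∈ Γ, G.inv x ∈ Γ)
    (U : Set (Fin d → ℝ)) (hUmeas : MeasurableSet U) (hUbdd : Bornology.IsBounded U)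
    (hUpos : 0 < volume U)
    (hUdisj : ∀ γ ∈ Γ, ∀ γ' ∈ Γ, γ ≠ γ' →
      volume (((fun y => G.mul γ y) '' U) ∩ ((fun y => G.mul γ' y) '' U)) = 0)
    (K : Set (Fin d → ℝ)) (hK : IsCompact K) :
    ∃ C : ℝ, ∀ t : ℝ, 1 ≤ t →
      (Γ ∩ dil D.a t '' K).Finite ∧
      ((Γ ∩ dil D.a t '' K).ncard : ℝ) ≤ C * t ^ (∑ i, D.a i) :=
  stmt_14_general d G hHaar D Γ U hUmeas hUbdd hUpos hUdisj K hK
end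
end

section
/- On ℝ⁶ define the product (x₁,…,x₆)·(y₁,…,y₆) = (x₁+y₁, x₂+y₂, x₃+y₃, x₄+y₄+x₁y₂, x₅+y₅+x₂y₃, x₆+y₆+x₁y₅+x₄y₃), which makes ℝ⁶ a group with identity 0 (the group of 4×4 real unipotent upper-triangular matrices, with x₁,x₂,x₃ the first superdiagonal entries, x₄,x₅ the second superdiagonal entries, and x₆ the top-right entry). For b₁,…,b₆ > 0 and t > 0 let δ_t(x) = (t^{b₁}x₁,…,t^{b₆}x₆). Then: (i) δ_t is a group homomorphism for every t > 0 if and only if b₄ = b₁+b₂, b₅ = b₂+b₃, b₆ = b₁+b₅, and b₆ = b₄+b₃; (ii) for all x,y ∈ ℝ⁶ the limits lim_{t→∞} δ_{1/t}(δ_t(x)·δ_t(y)) and lim_{t→∞} δ_{1/t}((δ_t(x))⁻¹) exist if and only if b₄ ≥ b₁+b₂, b₅ ≥ b₂+b₃, b₆ ≥ b₁+b₅, and b₆ ≥ b₄+b₃. -/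
open Filter Topology

noncomputable section

/-- The product of `𝕌₄(ℝ)` in the coordinates
`x₁ = x_{12}, x₂ = x_{23}, x₃ = x_{34}, x₄ = x_{13}, x₅ = x_{24}, x₆ = x_{14}`
(Lean indices `0,…,5`). -/
def umul (x y : Fin 6 → ℝ) : Fin 6 → ℝ :=
  ![x 0 + y 0, x 1 + y 1, x 2 + y 2,
    x 3 + y 3 + x 0 * y 1, x 4 + y 4 + x 1 * y 2,
    x 5 + y 5 + x 0 * y 4 + x 3 * y 2]

/-- The inverse map of `𝕌₄(ℝ)` in the same coordinates. -/
def uinv (x : Fin 6 → ℝ) : Fin 6 → ℝ :=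
  ![-x 0, -x 1, -x 2,
    -x 3 + x 0 * x 1, -x 4 + x 1 * x 2,
    -x 5 + x 0 * x 4 - x 0 * x 1 * x 2 + x 2 * x 3]

/-- The straight dilations `δ_t(x) = (t^{b i} * x i)_i` on `ℝ⁶`. -/
def udil (b : Fin 6 → ℝ) (t : ℝ) (x : Fin 6 → ℝ) : Fin 6 → ℝ :=
  fun i => t ^ b i * x i


/-! Conjugating the product by `δ_t` rescales its four quadratic terms `x₁y₂, x₂y₃, x₁y₅, x₄y₃`
by the factors `t^{b₁+b₂-b₄}, t^{b₂+b₃-b₅}, t^{b₁+b₅-b₆}, t^{b₄+b₃-b₆}`, and conjugating the inverse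
rescales its terms by these factors and their products. Each factor is read off from the product of
two coordinate vectors, so `δ_t` is a homomorphism for all `t` iff every factor is identically `1`,
and the limits exist iff every factor converges as `t → ∞`, i.e. iff every exponent is `≤ 0`. -/

namespace U4

def scaledMul (s : Fin 4 → ℝ) (x y : Fin 6 → ℝ) : Fin 6 → ℝ :=
  ![x 0 + y 0, x 1 + y 1, x 2 + y 2,
    x 3 + y 3 + s 0 * (x 0 * y 1), x 4 + y 4 + s 1 * (x 1 * y 2),
    x 5 + y 5 + s 2 * (x 0 * y 4) + s 3 * (x 3 * y 2)]

def scaledInv (s : Fin 4 → ℝ) (x : Fin 6 → ℝ) : Fin 6 → ℝ :=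
  ![-x 0, -x 1, -x 2,
    -x 3 + s 0 * (x 0 * x 1), -x 4 + s 1 * (x 1 * x 2),
    -x 5 + s 2 * (x 0 * x 4) - s 2 * s 1 * (x 0 * x 1 * x 2) + s 3 * (x 2 * x 3)]

def dilDefect (b : Fin 6 → ℝ) : Fin 4 → ℝ :=
  ![b 0 + b 1 - b 3, b 1 + b 2 - b 4, b 0 + b 4 - b 5, b 3 + b 2 - b 5]

theorem umul_assoc (x y z : Fin 6 → ℝ) : umul (umul x y) z = umul x (umul y z) := by
  ext i; fin_cases i <;> simp [umul] <;> ring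

theorem umul_zero (x : Fin 6 → ℝ) : umul x 0 = x := by
  ext i; fin_cases i <;> simp [umul]

theorem zero_umul (x : Fin 6 → ℝ) : umul 0 x = x := by
  ext i; fin_cases i <;> simp [umul]

theorem umul_uinv (x : Fin 6 → ℝ) : umul x (uinv x) = 0 := by
  ext i; fin_cases i <;> simp [umul, uinv]; ring

theorem uinv_umul (x : Fin 6 → ℝ) : umul (uinv x) x = 0 := by
  ext i; fin_cases i <;> simp [umul, uinv]; ring

theorem scaledMul_one : scaledMul 1 = umul := by
  ext x y i; fin_cases i <;> simp [scaledMul, umul]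

theorem exists_scaledMul_apply_eq (k : Fin 4) :
    ∃ x y i, ∀ s, scaledMul s x y i = s k := by
  fin_cases k
  · exact ⟨Pi.single 0 1, Pi.single 1 1, 3, fun s => by simp [scaledMul]⟩
  · exact ⟨Pi.single 1 1, Pi.single 2 1, 4, fun s => by simp [scaledMul]⟩
  · exact ⟨Pi.single 0 1, Pi.single 4 1, 5, fun s => by simp [scaledMul]⟩
  · exact ⟨Pi.single 3 1, Pi.single 2 1, 5, fun s => by simp [scaledMul]⟩

theorem scaledMul_injective : Function.Injective scaledMul := by
  intro s s' h
  funext k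
  obtain ⟨x, y, i, hk⟩ := exists_scaledMul_apply_eq k
  simpa only [hk] using congrFun (congrFun (congrFun h x) y) i

theorem continuous_scaledMul (x y : Fin 6 → ℝ) : Continuous fun s => scaledMul s x y := by
  refine continuous_pi fun i => ?_
  fin_cases i <;> simp [scaledMul] <;> fun_prop

theorem continuous_scaledInv (x : Fin 6 → ℝ) : Continuous fun s => scaledInv s x := by
  refine continuous_pi fun i => ?_
  fin_cases i <;> simp [scaledInv] <;> fun_prop

theorem exists_tendsto_scaledMul_iff {α : Type*} {l : Filter α} {s : α → Fin 4 → ℝ} :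
    (∀ x y, ∃ L, Tendsto (fun a => scaledMul (s a) x y) l (𝓝 L)) ↔
      ∃ σ, Tendsto s l (𝓝 σ) := by
  refine ⟨fun h => ?_, fun ⟨σ, hσ⟩ x y =>
    ⟨_, ((continuous_scaledMul x y).tendsto σ).comp hσ⟩⟩
  suffices ∀ k, ∃ σk, Tendsto (fun a => s a k) l (𝓝 σk) by
    obtain ⟨σ, hσ⟩ := Classical.skolem.1 this
    exact ⟨σ, tendsto_pi_nhds.2 hσ⟩
  intro k
  obtain ⟨x, y, i, hk⟩ := exists_scaledMul_apply_eq k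
  obtain ⟨L, hL⟩ := h x y
  exact ⟨L i, by simpa only [hk] using tendsto_pi_nhds.1 hL i⟩

section Dilation

variable {b : Fin 6 → ℝ} {t : ℝ}

theorem udil_udil (ht : 0 ≤ t) {u : ℝ} (hu : 0 ≤ u) (x : Fin 6 → ℝ) :
    udil b t (udil b u x) = udil b (t * u) x := by
  ext i; simp only [udil, Real.mul_rpow ht hu]; ring

theorem udil_one (x : Fin 6 → ℝ) : udil b 1 x = x := by
  ext i; simp [udil]

theorem udil_inv_udil (ht : 0 < t) (x : Fin 6 → ℝ) : udil b t⁻¹ (udil b t x) = x := by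
  rw [udil_udil (inv_nonneg.2 ht.le) ht.le, inv_mul_cancel₀ ht.ne', udil_one]

theorem udil_udil_inv (ht : 0 < t) (x : Fin 6 → ℝ) : udil b t (udil b t⁻¹ x) = x := by
  rw [udil_udil ht.le (inv_nonneg.2 ht.le), mul_inv_cancel₀ ht.ne', udil_one]

theorem udil_inv_umul_udil (ht : 0 < t) (x y : Fin 6 → ℝ) :
    udil b t⁻¹ (umul (udil b t x) (udil b t y)) =
      scaledMul (fun k => t ^ dilDefect b k) x y := by
  have htpow : ∀ a : ℝ, t ^ a ≠ 0 := fun a => (Real.rpow_pos_of_pos ht a).ne'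
  ext i; fin_cases i <;>
    simp [udil, umul, scaledMul, dilDefect, Real.rpow_sub ht, Real.rpow_add ht,
      Real.inv_rpow ht.le] <;>
    field_simp

theorem udil_inv_uinv_udil (ht : 0 < t) (x : Fin 6 → ℝ) :
    udil b t⁻¹ (uinv (udil b t x)) = scaledInv (fun k => t ^ dilDefect b k) x := by
  have htpow : ∀ a : ℝ, t ^ a ≠ 0 := fun a => (Real.rpow_pos_of_pos ht a).ne'
  ext i; fin_cases i <;>
    simp [udil, uinv, scaledInv, dilDefect, Real.rpow_sub ht, Real.rpow_add ht,
      Real.inv_rpow ht.le] <;>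
    field_simp

theorem udil_map_umul_iff (ht : 0 < t) :
    (∀ x y, udil b t (umul x y) = umul (udil b t x) (udil b t y)) ↔
      (fun k => t ^ dilDefect b k) = 1 := by
  rw [← scaledMul_injective.eq_iff, scaledMul_one]
  refine ⟨fun h => ?_, fun h x y => ?_⟩
  · ext x y
    rw [← udil_inv_umul_udil ht, ← h, udil_inv_udil ht]
  · have hxy := congrFun (congrFun h x) y
    rw [← udil_inv_umul_udil ht] at hxy
    rw [← hxy, udil_udil_inv ht]

end Dilation

theorem forall_rpow_eq_one_iff {ι : Type*} {d : ι → ℝ} :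
    (∀ t : ℝ, 0 < t → (fun k => t ^ d k) = 1) ↔ d = 0 := by
  refine ⟨fun h => funext fun k => ?_, fun h t _ => funext fun k => by simp [h]⟩
  simpa [Real.exp_one_rpow] using congrFun (h _ (Real.exp_pos 1)) k

theorem exists_tendsto_rpow_atTop_iff {c : ℝ} :
    (∃ l, Tendsto (fun t : ℝ => t ^ c) atTop (𝓝 l)) ↔ c ≤ 0 := by
  refine ⟨fun ⟨l, hl⟩ => not_lt.1 fun hc =>
    not_tendsto_nhds_of_tendsto_atTop (tendsto_rpow_atTop hc) l hl, fun hc => ?_⟩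
  rcases hc.eq_or_lt with rfl | hc
  · exact ⟨1, by simp⟩
  · exact ⟨0, by simpa using tendsto_rpow_neg_atTop (neg_pos.2 hc)⟩

theorem exists_tendsto_rpow_pi_iff {ι : Type*} {d : ι → ℝ} :
    (∃ σ, Tendsto (fun t : ℝ => fun k => t ^ d k) atTop (𝓝 σ)) ↔ ∀ k, d k ≤ 0 := by
  simp_rw [tendsto_pi_nhds]
  exact Classical.skolem.symm.trans (forall_congr' fun k => exists_tendsto_rpow_atTop_iff)

end U4

open U4

theorem stmt_19_general (b : Fin 6 → ℝ) :
    (∀ x y z, umul (umul x y) z = umul x (umul y z)) ∧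
    (∀ x, umul x 0 = x) ∧ (∀ x, umul 0 x = x) ∧
    (∀ x, umul x (uinv x) = 0) ∧ (∀ x, umul (uinv x) x = 0) ∧
    ((∀ t : ℝ, 0 < t → ∀ x y, udil b t (umul x y) = umul (udil b t x) (udil b t y)) ↔
      (b 3 = b 0 + b 1 ∧ b 4 = b 1 + b 2 ∧ b 5 = b 0 + b 4 ∧ b 5 = b 3 + b 2)) ∧
    (((∀ x y, ∃ L, Tendsto
          (fun t : ℝ => udil b t⁻¹ (umul (udil b t x) (udil b t y))) atTop (𝓝 L)) ∧
      (∀ x, ∃ L, Tendsto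
          (fun t : ℝ => udil b t⁻¹ (uinv (udil b t x))) atTop (𝓝 L))) ↔
      (b 0 + b 1 ≤ b 3 ∧ b 1 + b 2 ≤ b 4 ∧ b 0 + b 4 ≤ b 5 ∧ b 3 + b 2 ≤ b 5)) := by
  refine ⟨umul_assoc, umul_zero, zero_umul, umul_uinv, uinv_umul, ?_, ?_⟩
  · rw [(forall₂_congr fun t (ht : 0 < t) => udil_map_umul_iff (b := b) ht).trans
      forall_rpow_eq_one_iff, funext_iff]
    simp [Fin.forall_fin_succ, dilDefect, sub_eq_zero]
    exact and_congr eq_comm (and_congr eq_comm (and_congr eq_comm eq_comm))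
  · have hmul : ∀ x y, (fun t : ℝ => udil b t⁻¹ (umul (udil b t x) (udil b t y))) =ᶠ[atTop]
        fun t => scaledMul (fun k => t ^ dilDefect b k) x y := fun x y =>
      (eventually_gt_atTop 0).mono fun t ht => udil_inv_umul_udil ht x y
    have hinv : ∀ x, (fun t : ℝ => udil b t⁻¹ (uinv (udil b t x))) =ᶠ[atTop]
        fun t => scaledInv (fun k => t ^ dilDefect b k) x := fun x =>
      (eventually_gt_atTop 0).mono fun t ht => udil_inv_uinv_udil ht x
    have hlim : (∃ σ, Tendsto (fun t : ℝ => fun k => t ^ dilDefect b k) atTop (𝓝 σ)) ↔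
        (b 0 + b 1 ≤ b 3 ∧ b 1 + b 2 ≤ b 4 ∧ b 0 + b 4 ≤ b 5 ∧ b 3 + b 2 ≤ b 5) := by
      simp [exists_tendsto_rpow_pi_iff, Fin.forall_fin_succ, dilDefect]
    rw [← hlim]
    constructor
    · rintro ⟨h, -⟩
      exact exists_tendsto_scaledMul_iff.1 fun x y => (h x y).imp fun _ hL => hL.congr' (hmul x y)
    · rintro ⟨σ, hσ⟩
      exact ⟨fun x y => (exists_tendsto_scaledMul_iff.2 ⟨σ, hσ⟩ x y).imp
          fun _ hL => hL.congr' (hmul x y).symm,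
        fun x => ⟨_, (((continuous_scaledInv x).tendsto σ).comp hσ).congr' (hinv x).symm⟩⟩

theorem stmt_19 (b : Fin 6 → ℝ) (hb : ∀ i, 0 < b i) :
    (∀ x y z, umul (umul x y) z = umul x (umul y z)) ∧
    (∀ x, umul x 0 = x) ∧ (∀ x, umul 0 x = x) ∧
    (∀ x, umul x (uinv x) = 0) ∧ (∀ x, umul (uinv x) x = 0) ∧
    ((∀ t : ℝ, 0 < t → ∀ x y, udil b t (umul x y) = umul (udil b t x) (udil b t y)) ↔
      (b 3 = b 0 + b 1 ∧ b 4 = b 1 + b 2 ∧ b 5 = b 0 + b 4 ∧ b 5 = b 3 + b 2)) ∧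
    (((∀ x y, ∃ L, Tendsto
          (fun t : ℝ => udil b t⁻¹ (umul (udil b t x) (udil b t y))) atTop (𝓝 L)) ∧
      (∀ x, ∃ L, Tendsto
          (fun t : ℝ => udil b t⁻¹ (uinv (udil b t x))) atTop (𝓝 L))) ↔
      (b 0 + b 1 ≤ b 3 ∧ b 1 + b 2 ≤ b 4 ∧ b 0 + b 4 ≤ b 5 ∧ b 3 + b 2 ≤ b 5)) :=
  stmt_19_general b
end
end
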